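/- arXiv:math/0209045 — 2 statements merged into one kernel-verified Lean document; each statement's English description precedes it below -/
import Mathlib

section
/- If a, b, c are distinct vertices of a finite simple graph G with ab and ac edges of G, then G^{(ab)(ac)} equals (G^{ac}) with the labels of vertices b and c swapped. -/
/-- The pair `x, y` lies in different classes among (neighbors of `a` only,
neighbors of `b` only, neighbors of both), with both distinct from `a` and `b`. -/
def togglePair {V : Type} (G : SimpleGraph V) (a b x y : V) : Prop :=
  (x ≠ a ∧ x ≠ b ∧ y ≠ a ∧ y ≠ b) ∧
  (G.Adj a x ∨ G.Adj b x) ∧ (G.Adj a y ∨ G.Adj b y) ∧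
  ¬((G.Adj a x ↔ G.Adj a y) ∧ (G.Adj b x ↔ G.Adj b y))

lemma togglePair_comm {V : Type} (G : SimpleGraph V) (a b x y : V) :
    togglePair G a b x y ↔ togglePair G a b y x := by
  unfold togglePair; tauto

/-- The pivot `G^{ab}`: toggle the adjacency of every pair of vertices (distinct
from `a`, `b`) lying in different classes among (neighbors of `a` only,
neighbors of `b` only, neighbors of both); all other adjacencies unchanged. -/
def pivot {V : Type} (G : SimpleGraph V) (a b : V) : SimpleGraph V where
  Adj x y := (togglePair G a b x y ∧ x ≠ y ∧ ¬ G.Adj x y) ∨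
    (¬ togglePair G a b x y ∧ G.Adj x y)
  symm := by
    constructor
    intro x y h
    rcases h with ⟨ht, hxy, hna⟩ | ⟨ht, ha⟩
    · exact Or.inl ⟨(togglePair_comm G a b x y).mp ht, hxy.symm,
        fun h => hna h.symm⟩
    · exact Or.inr ⟨fun h => ht ((togglePair_comm G a b y x).mp h), ha.symm⟩
  loopless := by
    constructor
    intro x h
    rcases h with ⟨_, hxy, _⟩ | ⟨_, ha⟩
    · exact hxy rfl
    · exact G.loopless.irrefl x ha

set_option linter.unusedSectionVars false
set_option linter.unreachableTactic false
set_option linter.unusedTactic false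

lemma pivot_adj {V : Type} (G : SimpleGraph V) (a b x y : V) :
    (pivot G a b).Adj x y ↔ (togglePair G a b x y ∧ x ≠ y ∧ ¬ G.Adj x y) ∨
    (¬ togglePair G a b x y ∧ G.Adj x y) := Iff.rfl
lemma pivot_adj_fst {V : Type} (G : SimpleGraph V) (a b y : V) :
    (pivot G a b).Adj a y ↔ G.Adj a y := by rw [pivot_adj]; simp [togglePair]
lemma pivot_adj_snd {V : Type} (G : SimpleGraph V) (a b y : V) :
    (pivot G a b).Adj b y ↔ G.Adj b y := by rw [pivot_adj]; simp [togglePair]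

section
variable {V : Type} [DecidableEq V] (G : SimpleGraph V) (a b c : V)

-- case x = a
lemma caseA (hab : G.Adj a b) (hac : G.Adj a c) (y : V) :
    (pivot (pivot G a b) a c).Adj a y ↔ (pivot G a c).Adj a (Equiv.swap b c y) := by
  rw [pivot_adj_fst, pivot_adj_fst, pivot_adj_fst]
  rcases eq_or_ne y b with rfl | hyb
  · simp [Equiv.swap_apply_left, hab, hac]
  rcases eq_or_ne y c with rfl | hyc
  · simp [Equiv.swap_apply_right, hab, hac]
  · rw [Equiv.swap_apply_of_ne_of_ne hyb hyc]

-- case x = b, y = c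
lemma caseD (hab : G.Adj a b) (hac : G.Adj a c) (hbc : b ≠ c) :
    (pivot (pivot G a b) a c).Adj b c ↔ (pivot G a c).Adj c b := by
  have hab' : a ≠ b := hab.ne
  have hac' : a ≠ c := hac.ne
  simp only [pivot_adj, togglePair, Equiv.swap_apply_left, Equiv.swap_apply_right,
    hab, hac, hab', hac', hbc, hab'.symm, hac'.symm, hbc.symm,
    ne_eq, not_false_eq_true, true_and, and_true, not_true_eq_false,
    false_and, and_false, iff_true, true_iff, not_not, true_or, or_false, false_or,
    SimpleGraph.irrefl, G.adj_comm b a, G.adj_comm c a, G.adj_comm c b]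
  all_goals (by_cases h7 : G.Adj b c <;> simp_all)

-- case x = b, y generic
lemma caseB (hab : G.Adj a b) (hac : G.Adj a c) (hbc : b ≠ c)
    (y : V) (hya : y ≠ a) (hyb : y ≠ b) (hyc : y ≠ c) :
    (pivot (pivot G a b) a c).Adj b y ↔ (pivot G a c).Adj c y := by
  have hab' : a ≠ b := hab.ne
  have hac' : a ≠ c := hac.ne
  simp only [pivot_adj, togglePair,
    hab, hac, hab', hac', hbc, hya, hyb, hyc, hab'.symm, hac'.symm, hbc.symm,
    hya.symm, hyb.symm, hyc.symm,
    ne_eq, not_false_eq_true, true_and, and_true, not_true_eq_false,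
    false_and, and_false, iff_true, true_iff, not_not, true_or, or_false, false_or,
    SimpleGraph.irrefl, G.adj_comm b a, G.adj_comm c a, G.adj_comm c b]
  by_cases h4 : G.Adj a y <;> by_cases h5 : G.Adj b y <;> by_cases h6 : G.Adj c y <;>
  by_cases h7 : G.Adj b c <;> simp_all

-- case x = c, y generic
lemma caseC (hab : G.Adj a b) (hac : G.Adj a c) (hbc : b ≠ c)
    (y : V) (hya : y ≠ a) (hyb : y ≠ b) (hyc : y ≠ c) :
    (pivot (pivot G a b) a c).Adj c y ↔ (pivot G a c).Adj b y := by
  have hab' : a ≠ b := hab.ne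
  have hac' : a ≠ c := hac.ne
  simp only [pivot_adj, togglePair,
    hab, hac, hab', hac', hbc, hya, hyb, hyc, hab'.symm, hac'.symm, hbc.symm,
    hya.symm, hyb.symm, hyc.symm,
    ne_eq, not_false_eq_true, true_and, and_true, not_true_eq_false,
    false_and, and_false, iff_true, true_iff, not_not, true_or, or_false, false_or,
    SimpleGraph.irrefl, G.adj_comm b a, G.adj_comm c a, G.adj_comm c b]
  by_cases h4 : G.Adj a y <;> by_cases h5 : G.Adj b y <;> by_cases h6 : G.Adj c y <;>
  by_cases h7 : G.Adj b c <;> simp_all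

-- generic case
lemma caseE (hab : G.Adj a b) (hac : G.Adj a c) (hbc : b ≠ c)
    (x y : V) (hxa : x ≠ a) (hxb : x ≠ b) (hxc : x ≠ c)
    (hya : y ≠ a) (hyb : y ≠ b) (hyc : y ≠ c) :
    (pivot (pivot G a b) a c).Adj x y ↔ (pivot G a c).Adj x y := by
  have hab' : a ≠ b := hab.ne
  have hac' : a ≠ c := hac.ne
  rcases eq_or_ne x y with rfl | hxy
  · simp
  simp only [pivot_adj, togglePair, hab, hac, hab', hac', hbc,
    hxa, hxb, hxc, hya, hyb, hyc, hxy, hxa.symm, hxb.symm, hxc.symm, hya.symm,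
    hyb.symm, hyc.symm, hxy.symm, hab'.symm, hac'.symm, hbc.symm,
    ne_eq, not_false_eq_true, true_and, and_true, not_true_eq_false,
    false_and, and_false, iff_true, true_iff, not_not, true_or, or_false, false_or]
  by_cases h1 : G.Adj a x <;> by_cases h2 : G.Adj b x <;> by_cases h3 : G.Adj c x <;>
  by_cases h4 : G.Adj a y <;> by_cases h5 : G.Adj b y <;> by_cases h6 : G.Adj c y <;>
  by_cases h7 : G.Adj b c <;> simp_all
end

theorem pivot_two_eq_pivot_swap {V : Type} [DecidableEq V] (G : SimpleGraph V) (a b c : V)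
    (hab : G.Adj a b) (hac : G.Adj a c) (hbc : b ≠ c) :
    pivot (pivot G a b) a c = (pivot G a c).comap (Equiv.swap b c) := by
  have hab' : a ≠ b := hab.ne
  have hac' : a ≠ c := hac.ne
  ext x y
  simp only [SimpleGraph.comap_adj, Equiv.coe_fn_mk]
  rcases eq_or_ne x a with h | hxa
  · rw [h, Equiv.swap_apply_of_ne_of_ne hab' hac']
    exact caseA G a b c hab hac y
  rcases eq_or_ne y a with h | hya
  · rw [h, Equiv.swap_apply_of_ne_of_ne hab' hac', SimpleGraph.adj_comm,
      SimpleGraph.adj_comm ((pivot G a c))]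
    exact caseA G a b c hab hac x
  rcases eq_or_ne x b with h | hxb
  · rw [h]
    rcases eq_or_ne y c with h2 | hyc
    · rw [h2]
      simpa [Equiv.swap_apply_left, Equiv.swap_apply_right] using caseD G a b c hab hac hbc
    rcases eq_or_ne y b with h2 | hyb
    · rw [h2]; simp
    · simpa [Equiv.swap_apply_left, Equiv.swap_apply_of_ne_of_ne hyb hyc] using
        caseB G a b c hab hac hbc y hya hyb hyc
  rcases eq_or_ne x c with h | hxc
  · rw [h]
    rcases eq_or_ne y b with h2 | hyb
    · rw [h2, SimpleGraph.adj_comm, SimpleGraph.adj_comm ((pivot G a c))]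
      simpa [Equiv.swap_apply_left, Equiv.swap_apply_right] using caseD G a b c hab hac hbc
    rcases eq_or_ne y c with h2 | hyc
    · rw [h2]; simp
    · simpa [Equiv.swap_apply_right, Equiv.swap_apply_of_ne_of_ne hyb hyc] using
        caseC G a b c hab hac hbc y hya hyb hyc
  rcases eq_or_ne y b with h | hyb
  · rw [h, SimpleGraph.adj_comm, SimpleGraph.adj_comm ((pivot G a c))]
    simpa [Equiv.swap_apply_left, Equiv.swap_apply_of_ne_of_ne hxb hxc] using
      caseB G a b c hab hac hbc x hxa hxb hxc
  rcases eq_or_ne y c with h | hyc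
  · rw [h, SimpleGraph.adj_comm, SimpleGraph.adj_comm ((pivot G a c))]
    simpa [Equiv.swap_apply_right, Equiv.swap_apply_of_ne_of_ne hxb hxc] using
      caseC G a b c hab hac hbc x hxa hxb hxc
  · rw [Equiv.swap_apply_of_ne_of_ne hxb hxc, Equiv.swap_apply_of_ne_of_ne hyb hyc]
    exact caseE G a b c hab hac hbc x y hxa hxb hxc hya hyb hyc
end

section
/- The interlace polynomial of the star K_{1,n} (n ≥ 2) is q(K_{1,n}) = 2x + x^2 + x^3 + ... + x^n. -/
/-- Deletion of the vertex `a` from `G`. -/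
def delVert {V : Type} (G : SimpleGraph V) (a : V) : SimpleGraph {v : V // v ≠ a} :=
  G.comap (fun v => v.1)

/-- `q` is an interlace polynomial map: invariant under graph isomorphism,
satisfying the pivot-deletion recursion `q(G) = q(G-a) + q(G^{ab}-b)` for every
edge `ab`, and equal to `x^n` on the edgeless graph on `n` vertices. -/
def IsInterlacePoly
    (q : ∀ (V : Type) [Fintype V] [DecidableEq V], SimpleGraph V → Polynomial ℤ) : Prop :=
  (∀ (V W : Type) [Fintype V] [DecidableEq V] [Fintype W] [DecidableEq W]
      (G : SimpleGraph V) (H : SimpleGraph W), Nonempty (G ≃g H) → q V G = q W H) ∧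
  (∀ (V : Type) [Fintype V] [DecidableEq V] (G : SimpleGraph V) (a b : V), G.Adj a b →
      q V G = q {v : V // v ≠ a} (delVert G a) +
        q {v : V // v ≠ b} (delVert (pivot G a b) b)) ∧
  (∀ (V : Type) [Fintype V] [DecidableEq V],
      q V (⊥ : SimpleGraph V) = Polynomial.X ^ (Fintype.card V))

/-- The star `K_{1,n}`: a center (`none`) joined to `n` leaves. -/
def starGraph (n : ℕ) : SimpleGraph (Option (Fin n)) where
  Adj x y := x ≠ y ∧ (x = none ∨ y = none)
  symm := by
    constructor
    intro x y ⟨h1, h2⟩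
    exact ⟨h1.symm, h2.symm⟩
  loopless := ⟨fun x h => h.1 rfl⟩
lemma star_adj (n : ℕ) (x y : Option (Fin n)) :
    (starGraph n).Adj x y ↔ x ≠ y ∧ (x = none ∨ y = none) := Iff.rfl

lemma togglePair_star (n : ℕ) (b : Fin n) (x y : Option (Fin n)) :
    ¬ togglePair (starGraph n) none (some b) x y := by
  rintro ⟨⟨hx, hxb, hy, hyb⟩, -, -, hne⟩
  apply hne
  simp [star_adj, hx, hy, Ne.symm hx, Ne.symm hy]

lemma pivot_star (n : ℕ) (b : Fin n) :
    pivot (starGraph n) none (some b) = starGraph n := by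
  ext x y
  show _ ∨ _ ↔ _
  constructor
  · rintro (⟨ht, -, -⟩ | ⟨-, h⟩)
    · exact absurd ht (togglePair_star n b x y)
    · exact h
  · intro h; exact Or.inr ⟨togglePair_star n b x y, h⟩

lemma card_ne {n : ℕ} (a : Option (Fin n)) :
    Fintype.card {v : Option (Fin n) // v ≠ a} = n := by
  simp [Fintype.card_subtype_compl]

/-- deleting the center gives the edgeless graph -/
def isoBot (n : ℕ) :
    delVert (starGraph n) none ≃g (⊥ : SimpleGraph {v : Option (Fin n) // v ≠ none}) where
  toEquiv := Equiv.refl _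
  map_rel_iff' := by
    rintro ⟨x, hx⟩ ⟨y, hy⟩
    simp only [Equiv.refl_apply, SimpleGraph.bot_adj]
    constructor
    · rintro ⟨⟩
    · rintro ⟨-, h | h⟩
      · exact hx h
      · exact hy h

/-- the star on zero leaves is edgeless -/
def isoBot0 : starGraph 0 ≃g (⊥ : SimpleGraph (Option (Fin 0))) where
  toEquiv := Equiv.refl _
  map_rel_iff' := by
    rintro (_ | ⟨k⟩) (_ | ⟨k⟩)
    · simp [star_adj]
    all_goals exact k.elim0

/-- deleting a leaf from star (n+1) gives star n -/
def isoLeaf (n : ℕ) :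
    delVert (starGraph (n + 1)) (some (Fin.last n)) ≃g starGraph n where
  toEquiv :=
    { toFun := fun v => match v with
        | ⟨none, _⟩ => none
        | ⟨some k, h⟩ => some (k.castPred (fun hk => h (by rw [hk])))
      invFun := fun v => match v with
        | none => ⟨none, fun h => nomatch h⟩
        | some i => ⟨some i.castSucc, fun h =>
            (Fin.castSucc_lt_last i).ne (Option.some.inj h)⟩
      left_inv := by
        rintro ⟨x, hx⟩
        cases x with
        | none => rfl
        | some k => simp
      right_inv := by
        rintro (_ | i)
        · rfl
        · simp }
  map_rel_iff' := by
    rintro ⟨x, hx⟩ ⟨y, hy⟩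
    cases x <;> cases y <;>
      simp [star_adj, delVert, SimpleGraph.comap, Fin.castPred_inj]

lemma q_star_succ
    (q : ∀ (V : Type) [Fintype V] [DecidableEq V], SimpleGraph V → Polynomial ℤ)
    (hq : IsInterlacePoly q) (n : ℕ) :
    q (Option (Fin (n + 1))) (starGraph (n + 1)) =
      Polynomial.X ^ (n + 1) + q (Option (Fin n)) (starGraph n) := by
  have hadj : (starGraph (n + 1)).Adj none (some (Fin.last n)) :=
    ⟨fun h => (nomatch h), Or.inl rfl⟩
  rw [hq.2.1 _ _ none (some (Fin.last n)) hadj, pivot_star,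
    hq.1 _ _ _ _ ⟨isoBot (n + 1)⟩, hq.2.2, card_ne,
    hq.1 _ _ _ _ ⟨isoLeaf n⟩]

lemma q_star
    (q : ∀ (V : Type) [Fintype V] [DecidableEq V], SimpleGraph V → Polynomial ℤ)
    (hq : IsInterlacePoly q) (n : ℕ) :
    q (Option (Fin n)) (starGraph n) =
      Polynomial.X + ∑ k ∈ Finset.Icc 1 n, Polynomial.X ^ k := by
  induction n with
  | zero =>
      rw [hq.1 _ _ _ _ ⟨isoBot0⟩, hq.2.2]
      simp
  | succ n ih =>
      rw [q_star_succ q hq n, ih, Finset.sum_Icc_succ_top (by omega : 1 ≤ n + 1)]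
      ring

theorem interlacePoly_star
    (q : ∀ (V : Type) [Fintype V] [DecidableEq V], SimpleGraph V → Polynomial ℤ)
    (hq : IsInterlacePoly q) (n : ℕ) (hn : 2 ≤ n) :
    q (Option (Fin n)) (starGraph n) =
      2 * Polynomial.X + ∑ k ∈ Finset.Icc 2 n, Polynomial.X ^ k := by
  rw [q_star q hq n]
  have h : Finset.Icc 1 n = insert 1 (Finset.Icc 2 n) := by
    ext k
    simp only [Finset.mem_insert, Finset.mem_Icc]
    omega
  rw [h, Finset.sum_insert (by simp)]
  ring
end
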